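/- arXiv:2306.02010 — 3 statements merged into one kernel-verified Lean document; each statement's English description precedes it below -/
import Mathlib

section
/- Let Θ = [Θ_1, Θ_2, ..., Θ_H] be a T × (Hn) real matrix formed by horizontally concatenating H blocks Θ_h ∈ R^{T×n}, where each Θ_h is row-stochastic (all entries nonnegative and each row sums to 1). Then rank(Θ) ≤ H(n−1) + 1. -/
theorem rank_concat_row_stochastic_blocks
    (T H n : ℕ) (hT : 1 ≤ T) (hH : 1 ≤ H) (hn : 1 ≤ n)
    (Θ : Fin H → Matrix (Fin T) (Fin n) ℝ)
    (hpos : ∀ h t i, 0 ≤ Θ h t i)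
    (hsum : ∀ h t, ∑ i, Θ h t i = 1) :
    (Matrix.of fun (t : Fin T) (p : Fin H × Fin n) => Θ p.1 t p.2).rank
      ≤ H * (n - 1) + 1 := by
  obtain ⟨m, rfl⟩ : ∃ m, n = m + 1 := ⟨n - 1, (Nat.succ_pred_eq_of_pos hn).symm⟩
  set M := (Matrix.of fun (t : Fin T) (p : Fin H × Fin (m+1)) => Θ p.1 t p.2) with hM
  set f : Option (Fin H × Fin m) → (Fin T → ℝ) :=
    fun o => match o with
      | none => fun _ => (1 : ℝ)
      | some (h, i) => fun t => Θ h t i.castSucc with hf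
  have hcol : ∀ p, M.transpose p ∈ Submodule.span ℝ (Set.range f) := by
    rintro ⟨h, j⟩
    induction j using Fin.lastCases with
    | last =>
        have : M.transpose (h, Fin.last m) = f none - ∑ i : Fin m, f (some (h, i)) := by
          funext t
          have := hsum h t
          rw [Fin.sum_univ_castSucc] at this
          simp only [hM, hf, Matrix.transpose_apply, Matrix.of_apply,
            Pi.sub_apply, Finset.sum_apply]
          linarith
        rw [this]
        exact sub_mem (Submodule.subset_span ⟨none, rfl⟩)
          (Submodule.sum_mem _ fun i _ => Submodule.subset_span ⟨some (h, i), rfl⟩)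
    | cast i =>
        exact Submodule.subset_span ⟨some (h, i), rfl⟩
  rw [Matrix.rank_eq_finrank_span_cols]
  calc Module.finrank ℝ (Submodule.span ℝ (Set.range M.transpose))
      ≤ Module.finrank ℝ (Submodule.span ℝ (Set.range f)) :=
        Submodule.finrank_mono (Submodule.span_le.mpr (Set.range_subset_iff.mpr hcol))
    _ ≤ Fintype.card (Option (Fin H × Fin m)) := finrank_range_le_card f
    _ = H * (m + 1 - 1) + 1 := by simp [Nat.mul_comm]
end

section
/- Let Z = [Z_1, Z_2, ..., Z_H] be a T × (Hd) real matrix formed by horizontally concatenating blocks Z_h ∈ R^{T×d}, where every row of every block Z_h sums to the same constant C. Then rank(Z) ≤ H(d−1) + 1. -/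
/-! Each block has constant row sums, so its last column is `C • 1` minus the sum of its other
columns. Hence every column of the concatenation lies in the span of the all-ones vector and the
`H (d - 1)` non-last block columns, which bounds the rank by `H (d - 1) + 1`. -/

open Module Submodule

namespace Matrix

theorem rank_le_card_of_col_mem_span {m n ι R : Type*} [Fintype m] [Fintype n] [Fintype ι]
    [Field R] (A : Matrix m n R) (v : ι → m → R) (hA : ∀ j, A.col j ∈ span R (Set.range v)) :
    A.rank ≤ Fintype.card ι := by
  rw [rank_eq_finrank_span_cols]
  calc finrank R (span R (Set.range A.col))
      ≤ finrank R (span R (Set.range v)) :=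
        finrank_mono (span_le.2 (Set.range_subset_iff.2 hA))
    _ ≤ Fintype.card ι := finrank_range_le_card v

theorem col_last_eq_of_sum_row_eq {m R : Type*} [Ring R] {k : ℕ} (A : Matrix m (Fin (k + 1)) R)
    {C : R} (hA : ∀ t, ∑ j, A t j = C) :
    A.col (Fin.last k) = C • (fun _ => 1) - ∑ i : Fin k, A.col i.castSucc := by
  ext t
  have hsum := hA t
  rw [Fin.sum_univ_castSucc] at hsum
  simp only [col_apply, Pi.sub_apply, Pi.smul_apply, Finset.sum_apply, smul_eq_mul, mul_one]
  rw [← hsum]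
  abel

end Matrix

open Matrix

theorem rank_concat_constant_row_sum_blocks_general
    (T H d : ℕ) (hd : 1 ≤ d) (C : ℝ)
    (Z : Fin H → Matrix (Fin T) (Fin d) ℝ)
    (hsum : ∀ h t, ∑ j, Z h t j = C) :
    (Matrix.of fun (t : Fin T) (p : Fin H × Fin d) => Z p.1 t p.2).rank
      ≤ H * (d - 1) + 1 := by
  obtain ⟨k, rfl⟩ := Nat.exists_eq_add_of_le' hd
  let v : Option (Fin H × Fin k) → Fin T → ℝ :=
    fun o => o.elim (fun _ => 1) fun q => (Z q.1).col q.2.castSucc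
  have hv : ∀ h (i : Fin k), (Z h).col i.castSucc ∈ span ℝ (Set.range v) :=
    fun h i => subset_span ⟨some (h, i), rfl⟩
  have hcol : ∀ p : Fin H × Fin (k + 1),
      (of fun t (p : Fin H × Fin (k + 1)) => Z p.1 t p.2).col p ∈ span ℝ (Set.range v) := by
    rintro ⟨h, j⟩
    change (Z h).col j ∈ _
    induction j using Fin.lastCases with
    | last =>
      rw [col_last_eq_of_sum_row_eq (Z h) (hsum h)]
      exact sub_mem (smul_mem _ _ (subset_span ⟨none, rfl⟩)) (sum_mem fun i _ => hv h i)
    | cast i => exact hv h i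
  calc _ ≤ Fintype.card (Option (Fin H × Fin k)) := rank_le_card_of_col_mem_span _ v hcol
    _ = H * (k + 1 - 1) + 1 := by simp

theorem rank_concat_constant_row_sum_blocks
    (T H d : ℕ) (hT : 1 ≤ T) (hH : 1 ≤ H) (hd : 1 ≤ d) (C : ℝ)
    (Z : Fin H → Matrix (Fin T) (Fin d) ℝ)
    (hsum : ∀ h t, ∑ j, Z h t j = C) :
    (Matrix.of fun (t : Fin T) (p : Fin H × Fin d) => Z p.1 t p.2).rank
      ≤ H * (d - 1) + 1 :=
  rank_concat_constant_row_sum_blocks_general T H d hd C Z hsum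
end

section
/- Let E^(1), ..., E^(T) be full-rank n×d real matrices with n < d, and e^(1), ..., e^(T) vectors in R^d whose Kruskal rank is at least n (every subset of at most n of them is linearly independent). For any m ≤ n−1, there exists a rank-one matrix W ∈ R^{d×d} such that E^(t) W e^(t) = 0 for all 1 ≤ t ≤ m, and for all m < t ≤ T the vector E^(t) W e^(t) has pairwise distinct entries. -/
/-!
Take `W = u vᵀ`, so that `E W e = (v ⬝ᵥ e) • E u`. Over an infinite field a vector space is not
a finite union of proper subspaces. Since each `E t` is surjective, the hyperplanes
`(E t u) i = (E t u) j` for `i ≠ j` are proper, so some `u ≠ 0` avoids all of them. The Kruskal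
rank condition puts `e t` outside `span {e t' | t' < m}` for `t ≥ m`, so some functional `v`
kills that span but no such `e t`. When `n ≤ 1` there is nothing to arrange.
-/

open Matrix

theorem Matrix.rank_vecMulVec_of_ne_zero {K m n : Type*} [Field K] [Fintype m] [Fintype n]
    [DecidableEq n] {u : m → K} {v : n → K} (hu : u ≠ 0) (hv : v ≠ 0) :
    (vecMulVec u v).rank = 1 := by
  refine le_antisymm (rank_vecMulVec_le u v) (Nat.one_le_iff_ne_zero.mpr fun h => ?_)
  obtain ⟨i, hi⟩ := Function.ne_iff.mp hu
  obtain ⟨j, hj⟩ := Function.ne_iff.mp hv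
  rw [rank, Submodule.finrank_eq_zero, LinearMap.range_eq_bot] at h
  have : vecMulVec u v = 0 := toLin'.injective (by rw [toLin'_apply', h, map_zero])
  exact mul_ne_zero hi hj (congrFun (congrFun this i) j)

theorem Matrix.mulVecLin_surjective_of_rank_eq_card {K m n : Type*} [Field K] [Fintype m]
    [Fintype n] {A : Matrix m n K} (h : A.rank = Fintype.card m) :
    Function.Surjective A.mulVecLin := by
  rw [← LinearMap.range_eq_top]
  exact Submodule.eq_top_of_finrank_eq (h.trans (Module.finrank_fintype_fun_eq_card K).symm)

theorem exists_ne_zero_forall_injective_apply {K V ι τ : Type*} [Field K] [Infinite K]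
    [AddCommGroup V] [Module K V] [Nontrivial V] [Finite ι] [Finite τ]
    (A : τ → V →ₗ[K] ι → K) (hA : ∀ t, Function.Surjective (A t)) :
    ∃ u ≠ 0, ∀ t, Function.Injective (A t u) := by
  classical
  let p : Option (τ × {ij : ι × ι // ij.1 ≠ ij.2}) → Submodule K V
    | none => ⊥
    | some (t, ⟨(i, j), _⟩) =>
      LinearMap.ker (((LinearMap.proj i : (ι → K) →ₗ[K] K) - LinearMap.proj j) ∘ₗ A t)
  have hp : ∀ o, p o ≠ ⊤ := by
    rintro (_ | ⟨t, ⟨i, j⟩, hij⟩) htop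
    · exact bot_ne_top htop
    · obtain ⟨x, hx⟩ := hA t (Pi.single i 1)
      have hx' : x ∈ p (some (t, ⟨(i, j), hij⟩)) := htop ▸ Submodule.mem_top
      simp [p, hx, hij] at hx'
  obtain ⟨u, hu⟩ := Submodule.exists_forall_notMem_of_forall_ne_top p hp
  refine ⟨u, fun h => hu none (by simp [p, h]), fun t i j hij => ?_⟩
  by_contra hne
  exact hu (some (t, ⟨(i, j), hne⟩)) (by simp [p, hij])

theorem Submodule.exists_dual_le_ker_forall_apply_ne_zero {K M ι : Type*} [Field K] [Infinite K]
    [AddCommGroup M] [Module K M] [Finite ι] (S : Submodule K M) (w : ι → M)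
    (hw : ∀ i, w i ∉ S) : ∃ f : Module.Dual K M, S ≤ LinearMap.ker f ∧ ∀ i, f (w i) ≠ 0 := by
  obtain ⟨g, hg⟩ := Module.exists_dual_forall_apply_ne_zero (K := K) (fun i => S.mkQ (w i))
    fun i => by simpa using hw i
  exact ⟨g ∘ₗ S.mkQ, fun x hx => by simp [(Submodule.Quotient.mk_eq_zero S).mpr hx], hg⟩

theorem notMem_span_image_of_forall_card_le_linearIndependent {K V ι : Type*} [Field K]
    [AddCommGroup V] [Module K V] {e : ι → V} {k : ℕ}
    (he : ∀ s : Finset ι, s.card ≤ k → LinearIndependent K (fun x : s => e x))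
    {s : Finset ι} (hs : s.card < k) {t : ι} (ht : t ∉ s) :
    e t ∉ Submodule.span K (e '' s) := by
  classical
  have hind : LinearIndepOn K e ↑(insert t s) :=
    he _ ((Finset.card_insert_of_notMem ht).trans_le hs)
  rw [Finset.coe_insert] at hind
  exact ((linearIndepOn_insert (by simpa using ht)).mp hind).2

theorem exists_rank_one_null_and_distinct
    (n d T m : ℕ) (hnd : n < d) (hm : m ≤ n - 1)
    (E : Fin T → Matrix (Fin n) (Fin d) ℝ)
    (hE : ∀ t, (E t).rank = n)
    (e : Fin T → (Fin d → ℝ))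
    (hKruskal : ∀ s : Finset (Fin T), s.card ≤ n →
      LinearIndependent ℝ (fun x : s => e x)) :
    ∃ W : Matrix (Fin d) (Fin d) ℝ, W.rank = 1 ∧
      (∀ t : Fin T, (t : ℕ) < m → (E t) *ᵥ (W *ᵥ e t) = 0) ∧
      (∀ t : Fin T, m ≤ (t : ℕ) → ∀ i j : Fin n, i ≠ j →
        ((E t) *ᵥ (W *ᵥ e t)) i ≠ ((E t) *ᵥ (W *ᵥ e t)) j) := by
  have : Nonempty (Fin d) := ⟨⟨0, by omega⟩⟩
  obtain ⟨u, hu0, hu⟩ := exists_ne_zero_forall_injective_apply (fun t => (E t).mulVecLin)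
    fun t => mulVecLin_surjective_of_rank_eq_card ((hE t).trans (Fintype.card_fin n).symm)
  rcases Nat.lt_or_ge n 2 with hn | hn
  · exact ⟨vecMulVec u u, rank_vecMulVec_of_ne_zero hu0 hu0, fun t ht => by omega,
      fun t _ i j hij => absurd (Fin.ext (by omega)) hij⟩
  let s : Finset (Fin T) := {t | (t : ℕ) < m}
  let S := Submodule.span ℝ (e '' s)
  have hs : s.card < n := Fin.card_filter_val_lt.trans_lt (by omega)
  have hS : S < ⊤ := by
    classical
    rw [show S = Submodule.span ℝ ↑(s.image e) by simp [S]]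
    exact span_lt_top_of_card_lt_finrank
      (by simpa using Finset.card_image_le.trans_lt (hs.trans hnd))
  obtain ⟨w₀, -, hw₀⟩ := SetLike.exists_of_lt hS
  obtain ⟨f, hfS, hf⟩ := S.exists_dual_le_ker_forall_apply_ne_zero
    (fun o : Option {t : Fin T // m ≤ t} => o.elim w₀ (e ·)) <| by
      rintro (_ | ⟨t, ht⟩)
      exacts [hw₀, notMem_span_image_of_forall_card_le_linearIndependent hKruskal hs
        (by simpa [s] using ht)]
  let v := (dotProductEquiv ℝ (Fin d)).symm f
  have hWe : ∀ x, vecMulVec u v *ᵥ x = f x • u := fun x => by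
    rw [vecMulVec_mulVec, op_smul_eq_smul, ← dotProductEquiv_apply_apply,
      LinearEquiv.apply_symm_apply]
  refine ⟨vecMulVec u v, rank_vecMulVec_of_ne_zero hu0 ?_, fun t ht => ?_, fun t ht i j hij => ?_⟩
  · exact (dotProductEquiv ℝ (Fin d)).symm.map_ne_zero_iff.mpr
      fun hf0 => hf none (by simp [hf0])
  · rw [hWe, hfS (Submodule.subset_span ⟨t, by simpa [s], rfl⟩), zero_smul, mulVec_zero]
  · rw [hWe, mulVec_smul]
    exact ((smul_right_injective _ (hf (some ⟨t, ht⟩))).comp (hu t)).ne hij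
end
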